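/- Let Q be an inverse quantal frame and X a Q-sheaf. Then any set of Hilbert sections of X which is join-dense in X (every element of X is a join of elements of the set) is a Hilbert basis of X. -/

import Mathlib

/-- A unital involutive quantale: a complete lattice with an associative
multiplication preserving arbitrary joins in each variable, a unit `e`, and a
join-preserving involution. -/
structure InvQuantale (Q : Type*) [CompleteLattice Q] where
  mul : Q → Q → Q
  e : Q
  star : Q → Q
  mul_assoc : ∀ a b c, mul (mul a b) c = mul a (mul b c)
  sSup_mul : ∀ (S : Set Q) (b : Q), mul (sSup S) b = ⨆ a ∈ S, mul a b
  mul_sSup : ∀ (a : Q) (S : Set Q), mul a (sSup S) = ⨆ b ∈ S, mul a b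
  e_mul : ∀ a, mul e a = a
  mul_e : ∀ a, mul a e = a
  star_star : ∀ a, star (star a) = a
  star_mul : ∀ a b, star (mul a b) = mul (star b) (star a)
  star_sSup : ∀ S : Set Q, star (sSup S) = ⨆ a ∈ S, star a

/-- The set of partial units of a quantale. -/
def InvQuantale.PU {Q : Type*} [CompleteLattice Q] (Qs : InvQuantale Q) : Set Q :=
  {s | Qs.mul s (Qs.star s) ≤ Qs.e ∧ Qs.mul (Qs.star s) s ≤ Qs.e}

/-- An inverse quantal frame: a unital involutive quantale which is a frame,
has a stable support, and whose partial units join to the top. -/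
structure InverseQuantalFrame (Q : Type*) [Order.Frame Q] extends InvQuantale Q where
  supp : Q → Q
  supp_le_e : ∀ a, supp a ≤ e
  supp_sSup : ∀ S : Set Q, supp (sSup S) = ⨆ a ∈ S, supp a
  supp_le_mul_star : ∀ a, supp a ≤ mul a (star a)
  le_supp_mul : ∀ a, a ≤ mul (supp a) a
  supp_stable : ∀ b a, b ≤ e → supp (mul b a) = mul b (supp a)
  sSup_PU : sSup {s | mul s (star s) ≤ e ∧ mul (star s) s ≤ e} = ⊤

/-- A left module over a quantale: a complete lattice with a unital associative
action preserving arbitrary joins in each variable. -/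
structure QuantaleModule {Q : Type*} [CompleteLattice Q] (Qs : InvQuantale Q)
    (X : Type*) [CompleteLattice X] where
  act : Q → X → X
  act_mul : ∀ a b x, act (Qs.mul a b) x = act a (act b x)
  act_e : ∀ x, act Qs.e x = x
  sSup_act : ∀ (S : Set Q) (x : X), act (sSup S) x = ⨆ a ∈ S, act a x
  act_sSup : ∀ (a : Q) (S : Set X), act a (sSup S) = ⨆ x ∈ S, act a x

/-- A pre-Hilbert module over a quantale. -/
structure PreHilbertModule {Q : Type*} [CompleteLattice Q] (Qs : InvQuantale Q)
    (X : Type*) [CompleteLattice X] extends QuantaleModule Qs X where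
  inner : X → X → Q
  inner_act : ∀ a x y, inner (act a x) y = Qs.mul a (inner x y)
  sSup_inner : ∀ (S : Set X) (y : X), inner (sSup S) y = ⨆ x ∈ S, inner x y
  inner_star : ∀ x y, inner x y = Qs.star (inner y x)

namespace PreHilbertModule

variable {Q X : Type*} [CompleteLattice Q] [CompleteLattice X] {Qs : InvQuantale Q}

/-- A Hilbert section: `⟨x,s⟩s ≤ x` for all `x`. -/
def IsHilbertSection (H : PreHilbertModule Qs X) (s : X) : Prop :=
  ∀ x, H.act (H.inner x s) s ≤ x

/-- A regular element: `⟨s,s⟩s = s`. -/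
def IsRegularSection (H : PreHilbertModule Qs X) (s : X) : Prop :=
  H.act (H.inner s s) s = s

/-- A Hilbert basis: `x = ⋁_{t ∈ S} ⟨x,t⟩t` for all `x`. -/
def IsHilbertBasis (H : PreHilbertModule Qs X) (S : Set X) : Prop :=
  ∀ x, x = ⨆ t ∈ S, H.act (H.inner x t) t

/-- Non-degeneracy of the inner product. -/
def Nondegenerate (H : PreHilbertModule Qs X) : Prop :=
  ∀ x y, (∀ z, H.inner x z = H.inner y z) → x = y

end PreHilbertModule

/-- A `Q`-locale over an inverse quantal frame: a module which is a frame and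
satisfies the anchor condition. -/
structure QLocale {Q : Type*} [Order.Frame Q] (Qf : InverseQuantalFrame Q)
    (X : Type*) [Order.Frame X] extends QuantaleModule Qf.toInvQuantale X where
  anchor : ∀ b x, b ≤ Qf.e → act b x = act b ⊤ ⊓ x

/-- A `Q`-sheaf over an inverse quantal frame: a pre-Hilbert module which is a
frame, satisfies the anchor condition, and has a Hilbert basis. -/
structure QSheaf {Q : Type*} [Order.Frame Q] (Qf : InverseQuantalFrame Q)
    (X : Type*) [Order.Frame X] extends PreHilbertModule Qf.toInvQuantale X where
  anchor : ∀ b x, b ≤ Qf.e → act b x = act b ⊤ ⊓ x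
  hasBasis : ∃ S : Set X, ∀ x, x = ⨆ t ∈ S, act (inner x t) t

namespace QSheaf

variable {Q X : Type*} [Order.Frame Q] [Order.Frame X] {Qf : InverseQuantalFrame Q}

/-- The support `ς_X(x) = ⟨x,x⟩ ∧ e` of a `Q`-sheaf. -/
def sppX (H : QSheaf Qf X) (x : X) : Q := H.inner x x ⊓ Qf.e

/-- A local section: `ς_X(x)s = x` for all `x ≤ s`. -/
def IsLocalSection (H : QSheaf Qf X) (s : X) : Prop :=
  ∀ x ≤ s, H.act (H.sppX x) s = x

/-- A principal section: a local section with `⟨s,s⟩ ≤ e`. -/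
def IsPrincipalSection (H : QSheaf Qf X) (s : X) : Prop :=
  H.IsLocalSection s ∧ H.inner s s ≤ Qf.e

/-- A right local section: `x = s ∧ 1_Q·x` for all `x ≤ s`. -/
def IsRightLocalSection (H : QSheaf Qf X) (s : X) : Prop :=
  ∀ x ≤ s, x = s ⊓ H.act ⊤ x

/-- A local bisection: simultaneously a local section and a right local section. -/
def IsBisection (H : QSheaf Qf X) (s : X) : Prop :=
  H.IsLocalSection s ∧ H.IsRightLocalSection s

end QSheaf

/-!
Hilbert sections always give `⋁_{s ∈ S} ⟨x,s⟩s ≤ x`. For the reverse inequality, every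
element `t ≤ x` satisfies `t ≤ ⟨t,t⟩t ≤ ⟨x,t⟩t`: the first inequality holds in any pre-Hilbert
module with a Hilbert basis over a quantale satisfying `a ≤ a a* a`, which an inverse quantal
frame does thanks to its support. Join-density of `S` then finishes the proof.
-/

lemma monotone_of_map_sSup {α β : Type*} [CompleteLattice α] [CompleteLattice β] {f : α → β}
    (hf : ∀ S : Set α, f (sSup S) = ⨆ a ∈ S, f a) : Monotone f := fun a b hab =>
  calc f a ≤ ⨆ c ∈ ({a, b} : Set α), f c := le_biSup f (Set.mem_insert a _)
    _ = f b := by rw [← hf, sSup_pair, sup_eq_right.mpr hab]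

section Monotonicity

variable {Q X : Type*} [CompleteLattice Q] [CompleteLattice X] {Qs : InvQuantale Q}

lemma InvQuantale.mul_mono_left (Qs : InvQuantale Q) (c : Q) : Monotone (Qs.mul · c) :=
  monotone_of_map_sSup fun S => Qs.sSup_mul S c

lemma QuantaleModule.act_mono_left (M : QuantaleModule Qs X) (x : X) : Monotone (M.act · x) :=
  monotone_of_map_sSup fun S => M.sSup_act S x

lemma QuantaleModule.act_mono_right (M : QuantaleModule Qs X) (a : Q) : Monotone (M.act a) :=
  monotone_of_map_sSup (M.act_sSup a)

lemma PreHilbertModule.inner_mono_left (H : PreHilbertModule Qs X) (z : X) :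
    Monotone (H.inner · z) :=
  monotone_of_map_sSup fun S => H.sSup_inner S z

end Monotonicity

lemma InverseQuantalFrame.le_mul_star_mul {Q : Type*} [Order.Frame Q]
    (Qf : InverseQuantalFrame Q) (a : Q) : a ≤ Qf.mul a (Qf.mul (Qf.star a) a) :=
  calc a ≤ Qf.mul (Qf.supp a) a := Qf.le_supp_mul a
    _ ≤ Qf.mul (Qf.mul a (Qf.star a)) a := Qf.mul_mono_left a (Qf.supp_le_mul_star a)
    _ = Qf.mul a (Qf.mul (Qf.star a) a) := Qf.mul_assoc _ _ _

namespace PreHilbertModule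

variable {Q X : Type*} [CompleteLattice Q] [CompleteLattice X] {Qs : InvQuantale Q}
  (H : PreHilbertModule Qs X)

lemma act_inner_le_act_inner_self (hQ : ∀ a, a ≤ Qs.mul a (Qs.mul (Qs.star a) a))
    {u x : X} (hle : H.act (H.inner x u) u ≤ x) :
    H.act (H.inner x u) u ≤ H.act (H.inner x x) x := by
  set a := H.inner x u
  calc H.act a u ≤ H.act (Qs.mul a (Qs.mul (Qs.star a) a)) u := H.act_mono_left u (hQ a)
    _ = H.act a (H.act (Qs.star a) (H.act a u)) := by rw [H.act_mul, H.act_mul]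
    _ ≤ H.act a (H.act (Qs.star a) x) := H.act_mono_right a (H.act_mono_right _ hle)
    _ = H.act (H.inner (H.act a u) x) x := by rw [H.inner_act, H.inner_star u x, H.act_mul]
    _ ≤ H.act (H.inner x x) x := H.act_mono_left x (H.inner_mono_left x hle)

lemma le_act_inner_self (hQ : ∀ a, a ≤ Qs.mul a (Qs.mul (Qs.star a) a))
    {B : Set X} (hB : H.IsHilbertBasis B) (x : X) : x ≤ H.act (H.inner x x) x := by
  have hterm : ∀ u ∈ B, H.act (H.inner x u) u ≤ x := fun u hu =>
    (le_biSup (fun t => H.act (H.inner x t) t) hu).trans_eq (hB x).symm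
  calc x = ⨆ u ∈ B, H.act (H.inner x u) u := hB x
    _ ≤ H.act (H.inner x x) x := iSup₂_le fun u hu => H.act_inner_le_act_inner_self hQ (hterm u hu)

lemma le_act_inner_of_le (hQ : ∀ a, a ≤ Qs.mul a (Qs.mul (Qs.star a) a))
    {B : Set X} (hB : H.IsHilbertBasis B) {t x : X} (htx : t ≤ x) :
    t ≤ H.act (H.inner x t) t :=
  (H.le_act_inner_self hQ hB t).trans (H.act_mono_left t (H.inner_mono_left t htx))

end PreHilbertModule

/-- In a `Q`-sheaf over an inverse quantal frame, any join-dense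
set of Hilbert sections is a Hilbert basis. -/
theorem stmt2 {Q X : Type*} [Order.Frame Q] [Order.Frame X]
    (Qf : InverseQuantalFrame Q) (H : QSheaf Qf X)
    (S : Set X)
    (hsec : ∀ s ∈ S, H.IsHilbertSection s)
    (hdense : ∀ x : X, ∃ T ⊆ S, x = sSup T) :
    H.IsHilbertBasis S := by
  obtain ⟨B, hB⟩ := H.hasBasis
  intro x
  apply le_antisymm
  · obtain ⟨T, hTS, rfl⟩ := hdense x
    refine sSup_le fun t ht => ?_
    calc t ≤ H.act (H.inner (sSup T) t) t :=
          H.le_act_inner_of_le Qf.le_mul_star_mul hB (le_sSup ht)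
      _ ≤ ⨆ s ∈ S, H.act (H.inner (sSup T) s) s :=
          le_biSup (fun s => H.act (H.inner (sSup T) s) s) (hTS ht)
  · exact iSup₂_le fun t ht => hsec t ht x
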